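/- arXiv:2312.01434 — 2 statements merged into one kernel-verified Lean document; each statement's English description precedes it below -/
import Mathlib

section
/- Let p be an odd prime, n ≥ 1, and let f : F_{p^n} → F_{p^n} be an odd APN function that is also a permutation of F_{p^n}. Then the boomerang uniformity of f equals its (−1)-differential uniformity, i.e., B_f = ₋₁Δ_f. -/
open Finset

/-- The `c`-DDT entry of `f` at `(a, b)`:
the number of `x` with `f (x + a) - c * f x = b`. -/
def cDDT {F : Type*} [Field F] [Fintype F] [DecidableEq F]
    (f : F → F) (c a b : F) : ℕ :=
  (Finset.univ.filter (fun x : F => f (x + a) - c * f x = b)).card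

/-- The `c`-differential uniformity of `f`: the maximum of the `c`-DDT entries
over all `a, b`, where `a ≠ 0` is required when `c = 1`. -/
def cDU {F : Type*} [Field F] [Fintype F] [DecidableEq F]
    (f : F → F) (c : F) : ℕ :=
  (Finset.univ.filter (fun ab : F × F => c = 1 → ab.1 ≠ 0)).sup
    (fun ab => cDDT f c ab.1 ab.2)

/-- The classical differential uniformity of `f`. -/
def DU {F : Type*} [Field F] [Fintype F] [DecidableEq F] (f : F → F) : ℕ :=
  cDU f 1

/-- The BCT entry of `f` at `(a, b)`: the number of pairs `(x, y)` with
`f x - f y = b` and `f (x + a) - f (y + a) = b`. -/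
def BCT {F : Type*} [Field F] [Fintype F] [DecidableEq F]
    (f : F → F) (a b : F) : ℕ :=
  (Finset.univ.filter (fun xy : F × F =>
    f xy.1 - f xy.2 = b ∧ f (xy.1 + a) - f (xy.2 + a) = b)).card

/-- The boomerang uniformity of `f`: the maximum of the BCT entries over all
nonzero `a, b`. -/
def BU {F : Type*} [Field F] [Fintype F] [DecidableEq F] (f : F → F) : ℕ :=
  (Finset.univ.filter (fun ab : F × F => ab.1 ≠ 0 ∧ ab.2 ≠ 0)).sup
    (fun ab => BCT f ab.1 ab.2)

/-- The quadratic character: `χ 0 = 0`, `χ α = 1` if `α` is a nonzero square,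
and `χ α = -1` otherwise. -/
noncomputable def chi {F : Type*} [Field F] (α : F) : ℤ :=
  letI := Classical.dec (α = 0)
  letI := Classical.dec (IsSquare α)
  if α = 0 then 0 else if IsSquare α then 1 else -1

/-- The `c`-differential spectrum entry `ω_i` of a power function:
the number of `b` with `cΔ_f(1, b) = i`. -/
def omegaSpec {F : Type*} [Field F] [Fintype F] [DecidableEq F]
    (f : F → F) (c : F) (i : ℕ) : ℕ :=
  (Finset.univ.filter (fun b : F => cDDT f c 1 b = i)).card

/-- The boomerang spectrum entry `v_i` of a power function:
the number of nonzero `b` with `B_f(1, b) = i`. -/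
def vSpec {F : Type*} [Field F] [Fintype F] [DecidableEq F]
    (f : F → F) (i : ℕ) : ℕ :=
  (Finset.univ.filter (fun b : F => b ≠ 0 ∧ BCT f 1 b = i)).card


/-!
Substituting `y ↦ -y - a` and using that `f` is odd turns the boomerang system
`f x - f y = b`, `f (x + a) - f (y + a) = b` into `f (x + a) + f y = b`, `f (y + a) + f x = b`,
which is symmetric in `x` and `y`; its diagonal solutions are the solutions of
`f (x + a) + f x = b` counted by the `(-1)`-DDT. An off-diagonal solution would place `x`, `y`
and their images under the involution `z ↦ -z - a` in one fibre of `z ↦ f (z + a) - f z`,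
which has at most two elements. Since `b ≠ 0` the involution would have to fix both `x` and `y`,
but in odd characteristic it has a single fixed point. On the axes `a = 0` or `b = 0` the
`(-1)`-DDT entries of a permutation are at most one, so they do not affect the maximum.
-/

theorem sup_eq_of_subset_of_le_sup {α β : Type*} [SemilatticeSup β] [OrderBot β]
    {s t : Finset α} {g : α → β} (hst : s ⊆ t)
    (h : ∀ x ∈ t, x ∉ s → g x ≤ s.sup g) : t.sup g = s.sup g :=
  le_antisymm (Finset.sup_le fun x hx => (em (x ∈ s)).elim (le_sup ·) (h x hx)) (sup_mono hst)

theorem two_ne_zero_of_odd_card {F : Type*} [Field F] [Fintype F]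
    (h : Odd (Fintype.card F)) : (2 : F) ≠ 0 :=
  Ring.two_ne_zero fun hF => by
    have := FiniteField.even_card_of_char_two hF
    rw [Nat.odd_iff] at h
    omega

theorem sub_apply_neg_sub_eq {R : Type*} [CommRing R] {f : R → R}
    (hodd : ∀ x, f (-x) = -f x) (a z : R) :
    f (-z - a + a) - f (-z - a) = f (z + a) - f z := by
  rw [show -z - a + a = -z by ring, show -z - a = -(z + a) by ring, hodd, hodd]
  ring

section

variable {F : Type*} [Field F] [Fintype F] [DecidableEq F] {f : F → F}

theorem cDDT_one_le_DU {a : F} (ha : a ≠ 0) (b : F) : cDDT f 1 a b ≤ DU f := by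
  unfold DU cDU
  exact le_sup (f := fun ab : F × F => cDDT f 1 ab.1 ab.2) (b := (a, b)) (by simp [ha])

theorem cDDT_pos (c a x : F) : 0 < cDDT f c a (f (x + a) - c * f x) :=
  card_pos.mpr ⟨x, by simp⟩

theorem BCT_eq_card_symmetric (hodd : ∀ x, f (-x) = -f x) (a b : F) :
    BCT f a b = #{xy : F × F | f (xy.1 + a) + f xy.2 = b ∧ f (xy.2 + a) + f xy.1 = b} := by
  have hneg : ∀ y, f (-y - a) = -f (y + a) := fun y => by rw [← hodd]; ring_nf
  have hshift : ∀ y, f (-y - a + a) = -f y := fun y => by rw [← hodd]; ring_nf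
  refine card_nbij' (fun xy => (xy.1, -xy.2 - a)) (fun xy => (xy.1, -xy.2 - a)) ?_ ?_ ?_ ?_
  · rintro ⟨x, y⟩ h
    simp only [coe_filter, Set.mem_ofPred_eq, mem_univ, true_and, hneg, hshift] at h ⊢
    exact ⟨by linear_combination h.2, by linear_combination h.1⟩
  · rintro ⟨x, y⟩ h
    simp only [coe_filter, Set.mem_ofPred_eq, mem_univ, true_and, hneg, hshift] at h ⊢
    exact ⟨by linear_combination h.2, by linear_combination h.1⟩
  all_goals
    rintro ⟨x, y⟩ -
    simp

theorem eq_of_symmetric_system (h2 : (2 : F) ≠ 0) (hodd : ∀ x, f (-x) = -f x)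
    (hAPN : DU f ≤ 2) {a b x y : F} (ha : a ≠ 0) (hb : b ≠ 0)
    (hxy : f (x + a) + f y = b) (hyx : f (y + a) + f x = b) : x = y := by
  by_contra hne
  set S : Finset F := {z | f (z + a) - f z = f (x + a) - f x}
  have hxS : x ∈ S := by simp [S]
  have hyS : y ∈ S := by
    simp only [S, mem_filter, mem_univ, true_and]
    linear_combination hyx - hxy
  have hinvol : ∀ z ∈ S, -z - a ∈ S := fun z hz => by
    simp only [S, mem_filter, mem_univ, true_and] at hz ⊢
    rwa [sub_apply_neg_sub_eq hodd]
  have hcard : #S ≤ 2 := by simpa [cDDT, S] using (cDDT_one_le_DU ha _).trans hAPN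
  have hpair : ∀ z ∈ S, z = x ∨ z = y := fun z hz => by
    by_contra! hz'
    exact (two_lt_card.mpr ⟨z, hz, x, hxS, y, hyS, hz'.1, hz'.2, hne⟩).not_ge hcard
  have hbx : -x - a ≠ y := fun h => hb <| by
    rw [← hxy, ← h, show -x - a = -(x + a) by ring, hodd, add_neg_cancel]
  have hby : -y - a ≠ x := fun h => hb <| by
    rw [← hyx, ← h, show -y - a = -(y + a) by ring, hodd, add_neg_cancel]
  have hfx : -x - a = x := (hpair _ (hinvol x hxS)).resolve_right hbx
  have hfy : -y - a = y := (hpair _ (hinvol y hyS)).resolve_left hby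
  exact hne (mul_left_cancel₀ h2 (by linear_combination hfy - hfx))

theorem BCT_eq_cDDT_neg_one (h2 : (2 : F) ≠ 0) (hodd : ∀ x, f (-x) = -f x)
    (hAPN : DU f ≤ 2) {a b : F} (ha : a ≠ 0) (hb : b ≠ 0) :
    BCT f a b = cDDT f (-1) a b := by
  rw [BCT_eq_card_symmetric hodd, cDDT]
  refine card_nbij' Prod.fst (fun x => (x, x)) ?_ ?_ ?_ ?_
  · rintro ⟨x, y⟩ h
    simp only [coe_filter, Set.mem_ofPred_eq, mem_univ, true_and] at h ⊢
    obtain rfl := eq_of_symmetric_system h2 hodd hAPN ha hb h.1 h.2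
    linear_combination h.1
  · intro x h
    simp only [coe_filter, Set.mem_ofPred_eq, mem_univ, true_and] at h ⊢
    exact ⟨by linear_combination h, by linear_combination h⟩
  · rintro ⟨x, y⟩ h
    simp only [coe_filter, Set.mem_ofPred_eq, mem_univ, true_and] at h
    simp [eq_of_symmetric_system h2 hodd hAPN ha hb h.1 h.2]
  · intro x _
    rfl

theorem cDDT_neg_one_zero_left_le_one (h2 : (2 : F) ≠ 0) (hf : Function.Injective f) (b : F) :
    cDDT f (-1) 0 b ≤ 1 :=
  card_le_one.mpr fun x hx y hy => hf <| mul_left_cancel₀ h2 <| by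
    simp only [mem_filter, mem_univ, true_and, add_zero] at hx hy
    linear_combination hx - hy

theorem cDDT_neg_one_zero_right_le_one (h2 : (2 : F) ≠ 0) (hf : Function.Injective f)
    (hodd : ∀ x, f (-x) = -f x) (a : F) : cDDT f (-1) a 0 ≤ 1 := by
  have hsol : ∀ x ∈ ({x | f (x + a) - -1 * f x = 0} : Finset F), x + a = -x := fun x hx =>
    hf <| by simp only [mem_filter, mem_univ, true_and] at hx; rw [hodd]; linear_combination hx
  exact card_le_one.mpr fun x hx y hy => mul_left_cancel₀ h2 <| by
    linear_combination hsol x hx - hsol y hy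

theorem cDU_neg_one_eq_sup_off_axes (h2 : (2 : F) ≠ 0) (hf : Function.Injective f)
    (hodd : ∀ x, f (-x) = -f x) :
    cDU f (-1) = ({ab : F × F | ab.1 ≠ 0 ∧ ab.2 ≠ 0} : Finset _).sup
      fun ab => cDDT f (-1) ab.1 ab.2 := by
  have hb : f (0 + 1) - -1 * f 0 ≠ 0 := fun h => by
    simpa using hf (show f (0 + 1) = f (-0) by rw [hodd]; linear_combination h)
  have hpos : 0 < ({ab : F × F | ab.1 ≠ 0 ∧ ab.2 ≠ 0} : Finset _).sup
      fun ab => cDDT f (-1) ab.1 ab.2 :=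
    (cDDT_pos (-1) 1 0).trans_le <| le_sup (f := fun ab : F × F => cDDT f (-1) ab.1 ab.2)
      (b := (1, _)) (mem_filter.mpr ⟨mem_univ _, one_ne_zero, hb⟩)
  have hne : (-1 : F) ≠ 1 := fun h => h2 (by linear_combination -h)
  refine sup_eq_of_subset_of_le_sup (fun ab _ => by simp [hne]) ?_
  rintro ⟨a, b⟩ - hab
  refine le_trans ?_ hpos
  simp only [mem_filter, mem_univ, true_and, not_and_or, not_not] at hab
  rcases hab with rfl | rfl
  · exact cDDT_neg_one_zero_left_le_one h2 hf b
  · exact cDDT_neg_one_zero_right_le_one h2 hf hodd a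

end

theorem bu_eq_neg_one_du_general (p n : ℕ) (hpodd : Odd p)
    {F : Type*} [Field F] [Fintype F] [DecidableEq F]
    (hF : Fintype.card F = p ^ n)
    (f : F → F) (hfperm : Function.Bijective f)
    (hfodd : ∀ x : F, f (-x) = -f x) (hAPN : DU f ≤ 2) :
    BU f = cDU f (-1) := by
  have h2 : (2 : F) ≠ 0 := two_ne_zero_of_odd_card (hF ▸ hpodd.pow)
  rw [cDU_neg_one_eq_sup_off_axes h2 hfperm.injective hfodd, BU]
  refine sup_congr rfl fun ab hab => ?_
  rw [mem_filter] at hab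
  exact BCT_eq_cDDT_neg_one h2 hfodd hAPN hab.2.1 hab.2.2

theorem bu_eq_neg_one_du (p n : ℕ) (hp : p.Prime) (hpodd : Odd p) (hn : 1 ≤ n)
    {F : Type*} [Field F] [Fintype F] [DecidableEq F]
    (hF : Fintype.card F = p ^ n)
    (f : F → F) (hfperm : Function.Bijective f)
    (hfodd : ∀ x : F, f (-x) = -f x) (hAPN : DU f ≤ 2) :
    BU f = cDU f (-1) :=
  bu_eq_neg_one_du_general p n hpodd hF f hfperm hfodd hAPN
end

section
/- Let n ≥ 1 and let f(X) = X^{3^n−2} be the inverse function on F_{3^n}. Then the (classical) differential uniformity of f is Δ_f = 3. -/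
open Finset

/-!
For `a ≠ 0`, clearing denominators in `(x + a)⁻¹ - x⁻¹ = b` gives the quadratic
`b x² + a b x + a = 0` away from the two poles `x = 0` and `x = -a`, so there are at most two
solutions, except for `b = a⁻¹`, where both poles are solutions as well. In characteristic 3 the
quadratic for `b = a⁻¹` is `x² + a x + a² = (x - a)²`, so that entry is exactly `{0, a, -a}`.
-/

open Polynomial

theorem FiniteField.pow_card_sub_two_eq_inv {K : Type*} [Field K] [Fintype K]
    (hK : Fintype.card K ≠ 2) (x : K) : x ^ (Fintype.card K - 2) = x⁻¹ := by
  have hq : 2 < Fintype.card K := lt_of_le_of_ne (Fintype.one_lt_card (α := K)) (Ne.symm hK)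
  rcases eq_or_ne x 0 with rfl | hx
  · rw [zero_pow (by omega), inv_zero]
  · refine (inv_eq_of_mul_eq_one_left ?_).symm
    rw [← pow_succ, show Fintype.card K - 2 + 1 = Fintype.card K - 1 by omega]
    exact FiniteField.pow_card_sub_one_eq_one x hx

section InverseDifferences

variable {F : Type*} [Field F]

theorem inv_add_sub_inv_eq_inv_iff [CharP F 3] {a x : F} (ha : a ≠ 0) :
    (x + a)⁻¹ - x⁻¹ = a⁻¹ ↔ x = 0 ∨ x = a ∨ x = -a := by
  have h3 : (3 : F) = 0 := by exact_mod_cast CharP.cast_eq_zero F 3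
  constructor
  · intro h
    rcases eq_or_ne x 0 with rfl | hx
    · exact Or.inl rfl
    rcases eq_or_ne (x + a) 0 with hxa | hxa
    · exact Or.inr (Or.inr (eq_neg_of_add_eq_zero_left hxa))
    field_simp at h
    have hsq : (x - a) ^ 2 = 0 := by linear_combination -h - a * x * h3
    exact Or.inr (Or.inl (sub_eq_zero.mp (pow_eq_zero_iff two_ne_zero |>.mp hsq)))
  · rintro (rfl | rfl | rfl)
    · simp
    · rw [show x + x = -x by linear_combination x * h3, inv_neg]
      field_simp
      linear_combination -h3
    · simp [inv_neg]

theorem card_filter_inv_add_sub_inv_eq_inv [Fintype F] [DecidableEq F] [CharP F 3] {a : F}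
    (ha : a ≠ 0) : #{x | (x + a)⁻¹ - x⁻¹ = a⁻¹} = 3 := by
  have h3 : (3 : F) = 0 := by exact_mod_cast CharP.cast_eq_zero F 3
  have hneg : a ≠ -a := fun h => ha (by linear_combination a * h3 - h)
  rw [card_eq_three]
  refine ⟨0, a, -a, ha.symm, (neg_ne_zero.mpr ha).symm, hneg, ?_⟩
  ext x
  simp only [mem_filter, mem_univ, true_and, mem_insert, mem_singleton,
    inv_add_sub_inv_eq_inv_iff ha]

theorem card_filter_inv_add_sub_inv_le_two [Fintype F] [DecidableEq F] {a b : F}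
    (ha : a ≠ 0) (hb : b ≠ a⁻¹) : #{x | (x + a)⁻¹ - x⁻¹ = b} ≤ 2 := by
  set p : F[X] := C b * X ^ 2 + C (a * b) * X + C a
  have hp : p ≠ 0 := fun h => ha (by simpa [p] using congrArg (eval 0) h)
  calc #{x | (x + a)⁻¹ - x⁻¹ = b} ≤ p.natDegree := by
        refine card_le_degree_of_subset_roots fun x hx => ?_
        simp only [mem_val, mem_filter, mem_univ, true_and] at hx
        have hx0 : x ≠ 0 := by rintro rfl; simp_all
        have hxa : x + a ≠ 0 := by
          intro h
          rw [h, show x = -a by linear_combination h] at hx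
          exact hb (by simpa [inv_neg] using hx.symm)
        rw [mem_roots hp]
        field_simp at hx
        simp only [p, IsRoot, eval_add, eval_mul, eval_C, eval_pow, eval_X]
        linear_combination -hx
    _ ≤ 2 := natDegree_quadratic_le

theorem DU_inv_eq_three [Fintype F] [DecidableEq F] [CharP F 3] : DU (fun x : F => x⁻¹) = 3 := by
  unfold DU cDU cDDT
  refine le_antisymm (Finset.sup_le fun ab hab => ?_) ?_
  · simp only [mem_filter, mem_univ, true_and, forall_const] at hab
    simp only [one_mul]
    rcases eq_or_ne ab.2 ab.1⁻¹ with hb | hb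
    · rw [hb, card_filter_inv_add_sub_inv_eq_inv hab]
    · exact (card_filter_inv_add_sub_inv_le_two hab hb).trans (by norm_num)
  · refine Finset.le_sup_of_le (b := ((1 : F), (1 : F))) (by simp) ?_
    simpa using (card_filter_inv_add_sub_inv_eq_inv (one_ne_zero (α := F))).ge

end InverseDifferences

theorem du_inverse_char_three_general (n : ℕ)
    {F : Type*} [Field F] [Fintype F] [DecidableEq F]
    (hF : Fintype.card F = 3 ^ n) :
    DU (fun x : F => x ^ (3 ^ n - 2)) = 3 := by
  have : Fact (Nat.Prime 3) := ⟨Nat.prime_three⟩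
  have : CharP F 3 := charP_of_card_eq_prime_pow hF
  have hF2 : Fintype.card F ≠ 2 := fun h => by
    simpa [← hF, h, Nat.odd_iff] using (Odd.pow (by decide : Odd 3) : Odd (3 ^ n))
  rw [← hF]
  simp only [FiniteField.pow_card_sub_two_eq_inv hF2]
  exact DU_inv_eq_three

theorem du_inverse_char_three (n : ℕ) (hn : 1 ≤ n)
    {F : Type*} [Field F] [Fintype F] [DecidableEq F]
    (hF : Fintype.card F = 3 ^ n) :
    DU (fun x : F => x ^ (3 ^ n - 2)) = 3 :=
  du_inverse_char_three_general n hF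
end
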